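/- arXiv:0810.5507 — 3 statements merged into one kernel-verified Lean document; each statement's English description precedes it below -/
import Mathlib

section
/- For all k, l ∈ ℤ² \ {0} with k + l ≠ 0 and k − l ≠ 0, there exists a smooth 2π-periodic function p : ℝ² → ℝ such that (B⁰_k·∇B⁰_l)(θ) = [k,l]·(−α⁰_{k,l} B⁰_{k+l}(θ) + β⁰_{k,l} B⁰_{k−l}(θ)) + ∇p(θ) for all θ ∈ ℝ². (Helmholtz decomposition giving the Christoffel symbol Γ⁰_{B_k,B_l} of the L² Levi-Civita connection on the volume-preserving diffeomorphism group of T².) -/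
open Real

/-- Euclidean norm of a lattice point `k ∈ ℤ²`. -/
noncomputable def nZ (k : ℤ × ℤ) : ℝ := Real.sqrt ((k.1 : ℝ) ^ 2 + (k.2 : ℝ) ^ 2)

/-- `k · θ`. -/
noncomputable def dotZ (k : ℤ × ℤ) (θ : ℝ × ℝ) : ℝ := (k.1 : ℝ) * θ.1 + (k.2 : ℝ) * θ.2

/-- The vector field `A^s_k(θ) = |k|^{-(s+1)} cos(k·θ)·(k₂, -k₁)` (zero for `k = 0`). -/
noncomputable def vfA (s : ℝ) (k : ℤ × ℤ) (θ : ℝ × ℝ) : ℝ × ℝ :=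
  ((nZ k) ^ (-(s + 1)) * Real.cos (dotZ k θ)) • ((k.2 : ℝ), -(k.1 : ℝ))

/-- The vector field `B^s_k(θ) = |k|^{-(s+1)} sin(k·θ)·(k₂, -k₁)` (zero for `k = 0`). -/
noncomputable def vfB (s : ℝ) (k : ℤ × ℤ) (θ : ℝ × ℝ) : ℝ × ℝ :=
  ((nZ k) ^ (-(s + 1)) * Real.sin (dotZ k θ)) • ((k.2 : ℝ), -(k.1 : ℝ))

/-- `[k,l] = k₁ l₂ - k₂ l₁`. -/
noncomputable def crossZ (k l : ℤ × ℤ) : ℝ := (k.1 : ℝ) * (l.2 : ℝ) - (k.2 : ℝ) * (l.1 : ℝ)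

/-- Advection `(X·∇Y)(θ) := DY(θ)(X(θ))`. -/
noncomputable def adv (X Y : ℝ × ℝ → ℝ × ℝ) (θ : ℝ × ℝ) : ℝ × ℝ :=
  fderiv ℝ Y θ (X θ)

/-- `α⁰_{k,l} = (|k+l|² - |k|² + |l|²) / (4|k||l||k+l|)`. -/
noncomputable def alpha0 (k l : ℤ × ℤ) : ℝ :=
  ((nZ (k + l)) ^ 2 - (nZ k) ^ 2 + (nZ l) ^ 2) / (4 * (nZ k * nZ l * nZ (k + l)))

/-- `β⁰_{k,l} = (|k-l|² - |k|² + |l|²) / (4|k||l||k-l|)`. -/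
noncomputable def beta0 (k l : ℤ × ℤ) : ℝ :=
  ((nZ (k - l)) ^ 2 - (nZ k) ^ 2 + (nZ l) ^ 2) / (4 * (nZ k * nZ l * nZ (k - l)))

/-- Gradient of a scalar function on `ℝ²`, in coordinates. -/
noncomputable def gradP (p : ℝ × ℝ → ℝ) (θ : ℝ × ℝ) : ℝ × ℝ :=
  (fderiv ℝ p θ (1, 0), fderiv ℝ p θ (0, 1))

/- ------------ auxiliary lemmas ------------- -/

noncomputable def dotCLM (k : ℤ × ℤ) : ℝ × ℝ →L[ℝ] ℝ :=
  (k.1 : ℝ) • (ContinuousLinearMap.fst ℝ ℝ ℝ) + (k.2 : ℝ) • (ContinuousLinearMap.snd ℝ ℝ ℝ)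

lemma dotCLM_apply (k : ℤ × ℤ) (v : ℝ × ℝ) : dotCLM k v = dotZ k v := by
  simp [dotCLM, dotZ]

lemma hasFDerivAt_dotZ (k : ℤ × ℤ) (θ : ℝ × ℝ) : HasFDerivAt (dotZ k) (dotCLM k) θ := by
  have h : dotZ k = fun v => dotCLM k v := by funext v; rw [dotCLM_apply]
  rw [h]; exact (dotCLM k).hasFDerivAt

lemma hasFDerivAt_sin_dot (k : ℤ × ℤ) (θ : ℝ × ℝ) :
    HasFDerivAt (fun θ => Real.sin (dotZ k θ)) (Real.cos (dotZ k θ) • dotCLM k) θ :=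
  (Real.hasDerivAt_sin (dotZ k θ)).comp_hasFDerivAt θ (hasFDerivAt_dotZ k θ)

lemma hasFDerivAt_cos_dot (k : ℤ × ℤ) (θ : ℝ × ℝ) :
    HasFDerivAt (fun θ => Real.cos (dotZ k θ)) ((-Real.sin (dotZ k θ)) • dotCLM k) θ :=
  (Real.hasDerivAt_cos (dotZ k θ)).comp_hasFDerivAt θ (hasFDerivAt_dotZ k θ)

lemma hasFDerivAt_smul_sin (c : ℝ) (k : ℤ × ℤ) (w : ℝ × ℝ) (θ : ℝ × ℝ) :
    HasFDerivAt (fun θ => (c * Real.sin (dotZ k θ)) • w)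
      (((c * Real.cos (dotZ k θ)) • dotCLM k).smulRight w) θ := by
  have h1 := ((hasFDerivAt_sin_dot k θ).const_mul c).smul (hasFDerivAt_const w θ)
  refine h1.congr_fderiv ?_
  ext v <;> simp [mul_comm, mul_assoc, smul_smul]

lemma fderiv_smul_sin_apply (c : ℝ) (k : ℤ × ℤ) (w : ℝ × ℝ) (θ v : ℝ × ℝ) :
    fderiv ℝ (fun θ => (c * Real.sin (dotZ k θ)) • w) θ v
      = (c * Real.cos (dotZ k θ) * dotZ k v) • w := by
  rw [(hasFDerivAt_smul_sin c k w θ).fderiv]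
  simp [dotCLM_apply, mul_assoc, smul_smul]

lemma fderiv_two_cos_apply (c₁ c₂ : ℝ) (m n : ℤ × ℤ) (θ v : ℝ × ℝ) :
    fderiv ℝ (fun θ => c₁ * Real.cos (dotZ m θ) + c₂ * Real.cos (dotZ n θ)) θ v
      = -(c₁ * Real.sin (dotZ m θ) * dotZ m v) - c₂ * Real.sin (dotZ n θ) * dotZ n v := by
  have h1 := (hasFDerivAt_cos_dot m θ).const_mul c₁
  have h2 := (hasFDerivAt_cos_dot n θ).const_mul c₂
  have h3 : HasFDerivAt (fun θ => c₁ * Real.cos (dotZ m θ) + c₂ * Real.cos (dotZ n θ)) _ θ :=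
    h1.add h2
  rw [h3.fderiv]
  simp [dotCLM_apply]
  ring

lemma contDiff_cos_dot (m : ℤ × ℤ) : ContDiff ℝ (⊤ : ℕ∞) (fun θ : ℝ × ℝ => Real.cos (dotZ m θ)) := by
  apply Real.contDiff_cos.comp
  unfold dotZ
  fun_prop

lemma sq_pos_of_ne (m : ℤ × ℤ) (hm : m ≠ 0) : 0 < (m.1 : ℝ) ^ 2 + (m.2 : ℝ) ^ 2 := by
  have h1 : ¬(m.1 = 0 ∧ m.2 = 0) := by
    intro h
    exact hm (Prod.ext h.1 h.2)
  rcases not_and_or.mp h1 with h | h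
  · have : (m.1 : ℝ) ≠ 0 := Int.cast_ne_zero.mpr h
    positivity
  · have : (m.2 : ℝ) ≠ 0 := Int.cast_ne_zero.mpr h
    positivity

lemma nZ_pos (m : ℤ × ℤ) (hm : m ≠ 0) : 0 < nZ m :=
  Real.sqrt_pos.mpr (sq_pos_of_ne m hm)

lemma nZ_sq (m : ℤ × ℤ) : nZ m ^ 2 = (m.1 : ℝ) ^ 2 + (m.2 : ℝ) ^ 2 :=
  Real.sq_sqrt (by positivity)


set_option maxHeartbeats 2000000 in
set_option maxRecDepth 100000 in
theorem christoffel_BB (k l : ℤ × ℤ) (hk : k ≠ 0) (hl : l ≠ 0)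
    (hkl : k + l ≠ 0) (hkl' : k - l ≠ 0) :
    ∃ p : ℝ × ℝ → ℝ, ContDiff ℝ (⊤ : ℕ∞) p ∧
      (∀ θ : ℝ × ℝ, p (θ.1 + 2 * π, θ.2) = p θ) ∧
      (∀ θ : ℝ × ℝ, p (θ.1, θ.2 + 2 * π) = p θ) ∧
      ∀ θ : ℝ × ℝ,
        adv (vfB 0 k) (vfB 0 l) θ =
          crossZ k l • ((-(alpha0 k l)) • vfB 0 (k + l) θ + beta0 k l • vfB 0 (k - l) θ) + gradP p θ := by
  have hnk := nZ_pos k hk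
  have hnl := nZ_pos l hl
  have hnm := nZ_pos (k + l) hkl
  have hnn := nZ_pos (k - l) hkl'
  have hQm := sq_pos_of_ne (k + l) hkl
  have hQn := sq_pos_of_ne (k - l) hkl'
  set X : ℝ := crossZ k l with hX
  set c₁ : ℝ := X ^ 2 / (2 * (nZ k * nZ l) * ((((k + l).1 : ℝ)) ^ 2 + (((k + l).2 : ℝ)) ^ 2)) with hc₁
  set c₂ : ℝ := X ^ 2 / (2 * (nZ k * nZ l) * ((((k - l).1 : ℝ)) ^ 2 + (((k - l).2 : ℝ)) ^ 2)) with hc₂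
  refine ⟨fun θ => c₁ * Real.cos (dotZ (k + l) θ) + c₂ * Real.cos (dotZ (k - l) θ), ?_, ?_, ?_, ?_⟩
  · exact (contDiff_const.mul (contDiff_cos_dot (k + l))).add
      (contDiff_const.mul (contDiff_cos_dot (k - l)))
  · intro θ
    have h : ∀ m : ℤ × ℤ, dotZ m (θ.1 + 2 * π, θ.2) = dotZ m θ + (m.1 : ℤ) * (2 * π) := by
      intro m; simp [dotZ]; push_cast; ring
    simp only [h, Real.cos_add_int_mul_two_pi]
  · intro θ
    have h : ∀ m : ℤ × ℤ, dotZ m (θ.1, θ.2 + 2 * π) = dotZ m θ + (m.2 : ℤ) * (2 * π) := by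
      intro m; simp [dotZ]; push_cast; ring
    simp only [h, Real.cos_add_int_mul_two_pi]
  · intro θ
    have hrp : ∀ m : ℤ × ℤ, nZ m ^ (-(0 + 1) : ℝ) = (nZ m)⁻¹ := by
      intro m
      rw [show (-(0 + 1) : ℝ) = -1 by norm_num, Real.rpow_neg_one]
    -- compute the advection term
    have hadv : adv (vfB 0 k) (vfB 0 l) θ
        = ((nZ l)⁻¹ * Real.cos (dotZ l θ) *
            ((nZ k)⁻¹ * Real.sin (dotZ k θ) * ((l.1 : ℝ) * (k.2 : ℝ) - (l.2 : ℝ) * (k.1 : ℝ))))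
              • ((l.2 : ℝ), -(l.1 : ℝ)) := by
      unfold adv
      have h : vfB 0 l = fun θ => (((nZ l)⁻¹) * Real.sin (dotZ l θ)) • ((l.2 : ℝ), -(l.1 : ℝ)) := by
        funext θ; unfold vfB; rw [hrp]
      rw [h, fderiv_smul_sin_apply]
      congr 1
      unfold vfB
      rw [hrp]
      simp only [dotZ, Prod.smul_fst, Prod.smul_snd, smul_eq_mul]
      ring
    -- compute the gradient term
    have hgrad : gradP (fun θ => c₁ * Real.cos (dotZ (k + l) θ) + c₂ * Real.cos (dotZ (k - l) θ)) θ
        = (-(c₁ * Real.sin (dotZ (k + l) θ) * ((k + l).1 : ℝ)) - c₂ * Real.sin (dotZ (k - l) θ) * ((k - l).1 : ℝ),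
           -(c₁ * Real.sin (dotZ (k + l) θ) * ((k + l).2 : ℝ)) - c₂ * Real.sin (dotZ (k - l) θ) * ((k - l).2 : ℝ)) := by
      unfold gradP
      rw [fderiv_two_cos_apply, fderiv_two_cos_apply]
      simp [dotZ]
    rw [hadv, hgrad]
    have hdm : dotZ (k + l) θ = dotZ k θ + dotZ l θ := by
      simp [dotZ]; push_cast; ring
    have hdn : dotZ (k - l) θ = dotZ k θ - dotZ l θ := by
      simp [dotZ]; push_cast; ring
    unfold vfB alpha0 beta0 crossZ at *
    simp only [hrp]
    rw [nZ_sq (k + l), nZ_sq (k - l), nZ_sq k, nZ_sq l]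
    rw [hdm, hdn, Real.sin_add, Real.sin_sub]
    have him : (nZ (k+l))⁻¹ = (nZ (k+l))⁻¹ := rfl
    have hQmm : nZ (k + l) * nZ (k + l) = ((k + l).1 : ℝ) ^ 2 + ((k + l).2 : ℝ) ^ 2 := by
      rw [← sq]; exact nZ_sq (k + l)
    have hQnn : nZ (k - l) * nZ (k - l) = ((k - l).1 : ℝ) ^ 2 + ((k - l).2 : ℝ) ^ 2 := by
      rw [← sq]; exact nZ_sq (k - l)
    simp only [Prod.fst_add, Prod.snd_add, Prod.fst_sub, Prod.snd_sub, Int.cast_add,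
      Int.cast_sub] at *
    set a := nZ k
    set b := nZ l
    set m := nZ (k + l)
    set n := nZ (k - l)
    set sa := Real.sin (dotZ k θ)
    set ca := Real.cos (dotZ k θ)
    set sb := Real.sin (dotZ l θ)
    set cb := Real.cos (dotZ l θ)
    set k1 := (k.1 : ℝ)
    set k2 := (k.2 : ℝ)
    set l1 := (l.1 : ℝ)
    set l2 := (l.2 : ℝ)
    have hsqm : m ^ 2 = (k1 + l1) ^ 2 + (k2 + l2) ^ 2 := by rw [sq]; exact hQmm
    have hsqn : n ^ 2 = (k1 - l1) ^ 2 + (k2 - l2) ^ 2 := by rw [sq]; exact hQnn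
    clear_value a b m n sa ca sb cb k1 k2 l1 l2 X c₁ c₂
    clear hadv hgrad hdm hdn hrp him hQmm hQnn
    have hQm' : (k1 + l1) ^ 2 + (k2 + l2) ^ 2 ≠ 0 := ne_of_gt hQm
    have hQn' : (k1 - l1) ^ 2 + (k2 - l2) ^ 2 ≠ 0 := ne_of_gt hQn
    simp only [Prod.smul_mk, Prod.mk_add_mk, smul_eq_mul, Prod.mk.injEq]
    rw [hc₁, hc₂, hX]
    have ha0 : a ≠ 0 := ne_of_gt hnk
    have hb0 : b ≠ 0 := ne_of_gt hnl
    have hm0 : m ≠ 0 := ne_of_gt hnm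
    have hn0 : n ≠ 0 := ne_of_gt hnn
    have hsqm2 : m ^ 4 = ((k1 + l1) ^ 2 + (k2 + l2) ^ 2) ^ 2 := by
      rw [show m ^ 4 = (m ^ 2) ^ 2 by ring, hsqm]
    have hsqn2 : n ^ 4 = ((k1 - l1) ^ 2 + (k2 - l2) ^ 2) ^ 2 := by
      rw [show n ^ 4 = (n ^ 2) ^ 2 by ring, hsqn]
    constructor <;>
      (field_simp [ha0, hb0, hm0, hn0, hQm', hQn']; ring_nf;
       (try rw [hsqm]); (try rw [hsqn]); (try rw [hsqm2]); (try rw [hsqn2]); ring)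
end

section
/- For all k, l ∈ ℤ² \ {0} with k + l ≠ 0 and k − l ≠ 0, there exists a smooth 2π-periodic function p : ℝ² → ℝ such that (A⁰_k·∇B⁰_l)(θ) = [k,l]·(−α⁰_{k,l} A⁰_{k+l}(θ) + β⁰_{k,l} A⁰_{k−l}(θ)) + ∇p(θ) for all θ ∈ ℝ². (Helmholtz decomposition giving the Christoffel symbol Γ⁰_{A_k,B_l} of the L² Levi-Civita connection on the volume-preserving diffeomorphism group of T².) -/
open Real

lemma sumsq_pos (x : ℤ × ℤ) (hx : x ≠ 0) : 0 < (x.1 : ℝ) ^ 2 + (x.2 : ℝ) ^ 2 := by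
  rcases eq_or_ne x.1 0 with h1 | h1
  · have h2 : x.2 ≠ 0 := fun h2 => hx (Prod.ext h1 h2)
    have h2' : (x.2 : ℝ) ≠ 0 := Int.cast_ne_zero.mpr h2
    have : 0 < (x.2 : ℝ) ^ 2 := by positivity
    nlinarith [sq_nonneg (x.1 : ℝ)]
  · have h1' : (x.1 : ℝ) ≠ 0 := Int.cast_ne_zero.mpr h1
    have : 0 < (x.1 : ℝ) ^ 2 := by positivity
    nlinarith [sq_nonneg (x.2 : ℝ)]

lemma nZ_pos_s7 (x : ℤ × ℤ) (hx : x ≠ 0) : 0 < nZ x := Real.sqrt_pos.mpr (sumsq_pos x hx)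

lemma nZ_sq_s7 (x : ℤ × ℤ) : nZ x ^ 2 = (x.1 : ℝ) ^ 2 + (x.2 : ℝ) ^ 2 :=
  Real.sq_sqrt (by positivity)

lemma nZ_rpow (x : ℤ × ℤ) : (nZ x) ^ (-(0 + 1) : ℝ) = (nZ x)⁻¹ := by
  have h0 : (0:ℝ) ≤ nZ x := Real.sqrt_nonneg _
  rw [show (-(0+1):ℝ) = -1 by norm_num, Real.rpow_neg h0, Real.rpow_one]

noncomputable def Lm (m : ℤ × ℤ) : ℝ × ℝ →L[ℝ] ℝ :=
  (m.1 : ℝ) • ContinuousLinearMap.fst ℝ ℝ ℝ + (m.2 : ℝ) • ContinuousLinearMap.snd ℝ ℝ ℝ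

lemma Lm_apply (m : ℤ × ℤ) (θ : ℝ × ℝ) : Lm m θ = dotZ m θ := by
  simp [Lm, dotZ]

lemma hasFDerivAt_dotZ_s7 (m : ℤ × ℤ) (θ : ℝ × ℝ) : HasFDerivAt (dotZ m) (Lm m) θ := by
  have h : dotZ m = ⇑(Lm m) := by funext x; rw [Lm_apply]
  rw [h]; exact (Lm m).hasFDerivAt

lemma contDiff_dotZ (m : ℤ × ℤ) : ContDiff ℝ (⊤ : ℕ∞) (dotZ m) := by
  unfold dotZ; fun_prop

lemma dotZ_shift1 (m : ℤ × ℤ) (θ : ℝ × ℝ) :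
    dotZ m (θ.1 + 2 * π, θ.2) = dotZ m θ + m.1 * (2 * π) := by
  simp [dotZ]; ring

lemma dotZ_shift2 (m : ℤ × ℤ) (θ : ℝ × ℝ) :
    dotZ m (θ.1, θ.2 + 2 * π) = dotZ m θ + m.2 * (2 * π) := by
  simp [dotZ]; ring

lemma dotZ_add (k l : ℤ × ℤ) (θ : ℝ × ℝ) : dotZ (k + l) θ = dotZ k θ + dotZ l θ := by
  simp [dotZ, Prod.fst_add, Prod.snd_add]; ring

lemma dotZ_sub (k l : ℤ × ℤ) (θ : ℝ × ℝ) : dotZ (k - l) θ = dotZ k θ - dotZ l θ := by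
  simp [dotZ, Prod.fst_sub, Prod.snd_sub]; ring

lemma dotZ_smul (m : ℤ × ℤ) (c : ℝ) (w : ℝ × ℝ) : dotZ m (c • w) = c * dotZ m w := by
  simp [dotZ]; ring

set_option maxHeartbeats 2000000 in
theorem christoffel_AB (k l : ℤ × ℤ) (hk : k ≠ 0) (hl : l ≠ 0)
    (hkl : k + l ≠ 0) (hkl' : k - l ≠ 0) :
    ∃ p : ℝ × ℝ → ℝ, ContDiff ℝ (⊤ : ℕ∞) p ∧
      (∀ θ : ℝ × ℝ, p (θ.1 + 2 * π, θ.2) = p θ) ∧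
      (∀ θ : ℝ × ℝ, p (θ.1, θ.2 + 2 * π) = p θ) ∧
      ∀ θ : ℝ × ℝ,
        adv (vfA 0 k) (vfB 0 l) θ =
          crossZ k l • ((-(alpha0 k l)) • vfA 0 (k + l) θ + beta0 k l • vfA 0 (k - l) θ) + gradP p θ := by
  -- abbreviations
  have hNk := nZ_pos_s7 k hk
  have hNl := nZ_pos_s7 l hl
  have hNm := nZ_pos_s7 (k+l) hkl
  have hNn := nZ_pos_s7 (k-l) hkl'
  have hNk' : nZ k ≠ 0 := ne_of_gt hNk
  have hNl' : nZ l ≠ 0 := ne_of_gt hNl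
  have hNm' : nZ (k+l) ≠ 0 := ne_of_gt hNm
  have hNn' : nZ (k-l) ≠ 0 := ne_of_gt hNn
  have e1 : nZ (k+l) ^ 2 = ((k.1:ℝ)+(l.1:ℝ))^2 + ((k.2:ℝ)+(l.2:ℝ))^2 := by
    rw [nZ_sq_s7]; simp only [Prod.fst_add, Prod.snd_add]; push_cast; ring
  have e2 : nZ (k-l) ^ 2 = ((k.1:ℝ)-(l.1:ℝ))^2 + ((k.2:ℝ)-(l.2:ℝ))^2 := by
    rw [nZ_sq_s7]; simp only [Prod.fst_sub, Prod.snd_sub]; push_cast; ring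
  have hS1 : (0:ℝ) < ((k.1:ℝ)+(l.1:ℝ))^2 + ((k.2:ℝ)+(l.2:ℝ))^2 := by
    rw [← e1]; exact pow_pos hNm 2
  have hS2 : (0:ℝ) < ((k.1:ℝ)-(l.1:ℝ))^2 + ((k.2:ℝ)-(l.2:ℝ))^2 := by
    rw [← e2]; exact pow_pos hNn 2
  obtain ⟨c1, hc1⟩ : ∃ c : ℝ, c = -((crossZ k l)^2) /
      (2 * nZ k * nZ l * (((k.1:ℝ)+(l.1:ℝ))^2 + ((k.2:ℝ)+(l.2:ℝ))^2)) := ⟨_, rfl⟩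
  obtain ⟨c2, hc2⟩ : ∃ c : ℝ, c = -((crossZ k l)^2) /
      (2 * nZ k * nZ l * (((k.1:ℝ)-(l.1:ℝ))^2 + ((k.2:ℝ)-(l.2:ℝ))^2)) := ⟨_, rfl⟩
  refine ⟨fun θ => c1 * Real.sin (dotZ (k+l) θ) + c2 * Real.sin (dotZ (k-l) θ), ?_, ?_, ?_, ?_⟩
  · exact ((contDiff_const.mul (Real.contDiff_sin.comp (contDiff_dotZ _))).add
      (contDiff_const.mul (Real.contDiff_sin.comp (contDiff_dotZ _))))
  · intro θ
    simp only [dotZ_shift1]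
    rw [Real.sin_add_int_mul_two_pi, Real.sin_add_int_mul_two_pi]
  · intro θ
    simp only [dotZ_shift2]
    rw [Real.sin_add_int_mul_two_pi, Real.sin_add_int_mul_two_pi]
  · intro θ
    -- derivative of vfB 0 l
    have hB : HasFDerivAt (vfB 0 l)
        ((((nZ l) ^ (-(0 + 1) : ℝ)) • (Real.cos (dotZ l θ) • Lm l)).smulRight ((l.2:ℝ), -(l.1:ℝ))) θ := by
      have h1 := (hasFDerivAt_dotZ_s7 l θ).sin
      have h2 := h1.const_mul ((nZ l) ^ (-(0 + 1) : ℝ))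
      exact h2.smul_const ((l.2:ℝ), -(l.1:ℝ))
    have hadv : adv (vfA 0 k) (vfB 0 l) θ =
        ((nZ l) ^ (-(0 + 1) : ℝ) * (Real.cos (dotZ l θ) * dotZ l (vfA 0 k θ))) • ((l.2:ℝ), -(l.1:ℝ)) := by
      rw [adv, hB.fderiv]
      simp [ContinuousLinearMap.smulRight_apply, ContinuousLinearMap.smul_apply, Lm_apply,
        smul_eq_mul]
    -- derivative of p
    have hp : HasFDerivAt (fun θ => c1 * Real.sin (dotZ (k+l) θ) + c2 * Real.sin (dotZ (k-l) θ))
        ((c1 • (Real.cos (dotZ (k+l) θ) • Lm (k+l))) + (c2 • (Real.cos (dotZ (k-l) θ) • Lm (k-l)))) θ :=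
      (((hasFDerivAt_dotZ_s7 (k+l) θ).sin.const_mul c1).add
        ((hasFDerivAt_dotZ_s7 (k-l) θ).sin.const_mul c2))
    have hgrad : gradP (fun θ => c1 * Real.sin (dotZ (k+l) θ) + c2 * Real.sin (dotZ (k-l) θ)) θ =
        (c1 * Real.cos (dotZ (k+l) θ) * ((k+l).1 : ℝ) + c2 * Real.cos (dotZ (k-l) θ) * ((k-l).1 : ℝ),
         c1 * Real.cos (dotZ (k+l) θ) * ((k+l).2 : ℝ) + c2 * Real.cos (dotZ (k-l) θ) * ((k-l).2 : ℝ)) := by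
      rw [gradP, hp.fderiv]
      simp [ContinuousLinearMap.add_apply, ContinuousLinearMap.smul_apply, Lm_apply, dotZ,
        smul_eq_mul]
      constructor <;> ring
    rw [hadv, hgrad]
    -- coefficient simplifications
    have hA : (-(alpha0 k l)) * (nZ (k+l))⁻¹ =
        -((l.1:ℝ) * ((k.1:ℝ)+(l.1:ℝ)) + (l.2:ℝ) * ((k.2:ℝ)+(l.2:ℝ))) /
          (2 * nZ k * nZ l * (((k.1:ℝ)+(l.1:ℝ))^2 + ((k.2:ℝ)+(l.2:ℝ))^2)) := by
      have hinv : (nZ (k+l))⁻¹ = nZ (k+l) / (((k.1:ℝ)+(l.1:ℝ))^2 + ((k.2:ℝ)+(l.2:ℝ))^2) := by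
        rw [eq_div_iff (ne_of_gt hS1), ← e1]
        field_simp
        try ring
      rw [alpha0, nZ_sq_s7 k, nZ_sq_s7 l, e1, hinv]
      field_simp
      ring
    have hBc : (beta0 k l) * (nZ (k-l))⁻¹ =
        ((l.1:ℝ) * ((k.1:ℝ)-(l.1:ℝ)) + (l.2:ℝ) * ((k.2:ℝ)-(l.2:ℝ))) /
          (2 * nZ k * nZ l * (((k.1:ℝ)-(l.1:ℝ))^2 + ((k.2:ℝ)-(l.2:ℝ))^2)) * (-1) := by
      have hinv : (nZ (k-l))⁻¹ = nZ (k-l) / (((k.1:ℝ)-(l.1:ℝ))^2 + ((k.2:ℝ)-(l.2:ℝ))^2) := by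
        rw [eq_div_iff (ne_of_gt hS2), ← e2]
        field_simp
        try ring
      rw [beta0, nZ_sq_s7 k, nZ_sq_s7 l, e2, hinv]
      field_simp
      ring
    -- multiplied forms of the coefficient identities
    have halpha : -(alpha0 k l) =
        (-((l.1:ℝ) * ((k.1:ℝ)+(l.1:ℝ)) + (l.2:ℝ) * ((k.2:ℝ)+(l.2:ℝ))) /
          (2 * nZ k * nZ l * (((k.1:ℝ)+(l.1:ℝ))^2 + ((k.2:ℝ)+(l.2:ℝ))^2))) * nZ (k+l) := by
      rw [← hA, mul_assoc, inv_mul_cancel₀ hNm', mul_one]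
    have hbeta : beta0 k l =
        ((((l.1:ℝ) * ((k.1:ℝ)-(l.1:ℝ)) + (l.2:ℝ) * ((k.2:ℝ)-(l.2:ℝ)))) /
          (2 * nZ k * nZ l * (((k.1:ℝ)-(l.1:ℝ))^2 + ((k.2:ℝ)-(l.2:ℝ))^2)) * (-1)) * nZ (k-l) := by
      rw [← hBc, mul_assoc, inv_mul_cancel₀ hNn', mul_one]
    -- value of dotZ l (vfA 0 k θ)
    have haux : dotZ l (((k.2:ℝ)), -((k.1:ℝ))) = (l.1:ℝ) * (k.2:ℝ) - (l.2:ℝ) * (k.1:ℝ) := by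
      simp [dotZ]; ring
    have hdsm : dotZ l (vfA 0 k θ) =
        ((nZ k) ^ (-(0+1):ℝ) * Real.cos (dotZ k θ)) * ((l.1:ℝ) * (k.2:ℝ) - (l.2:ℝ) * (k.1:ℝ)) := by
      rw [vfA, dotZ_smul, haux]
    rw [hdsm, halpha, hbeta]
    simp only [vfA, nZ_rpow]
    simp only [Prod.smul_mk, Prod.mk_add_mk, smul_eq_mul]
    simp only [dotZ_add, dotZ_sub, Real.cos_add, Real.cos_sub]
    simp only [hc1, hc2, crossZ]
    simp only [Prod.fst_add, Prod.snd_add, Prod.fst_sub, Prod.snd_sub, Int.cast_add, Int.cast_sub]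
    rw [Prod.mk.injEq]
    constructor
    · field_simp
      ring
    · field_simp
      ring
end

section
/- For every fixed j ∈ ℤ² \ {0}, the family of nonnegative terms ( [i,j]⁴·(|i|² + |j|²)/(|i|²·|j|²·|i−j|²·|i+j|²) ) indexed by i ∈ ℤ² \ {0, j, −j} is NOT summable. (Hence the Ricci curvature of the L² metric on the volume-preserving diffeomorphism group of T², whose diagonal coefficient on A_j is minus this sum, is given by a divergent quantity.) -/
/-!
Along the line `i = m • (-j₂, j₁)` orthogonal to `j` one has `[i,j] = -m|j|²`, `|i|² = m²|j|²` and
`|i ± j|² = (m² + 1)|j|²`, so the summand equals `m²|j|² / (m² + 1) ≥ |j|² / 2`. The terms of the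
family therefore do not tend to zero.
-/

open Real

def rotZ (k : ℤ × ℤ) : ℤ × ℤ := (-k.2, k.1)

noncomputable def ricciCoeff (i j : ℤ × ℤ) : ℝ :=
  crossZ i j ^ 4 * (nZ i ^ 2 + nZ j ^ 2) / (nZ i ^ 2 * nZ j ^ 2 * nZ (i - j) ^ 2 * nZ (i + j) ^ 2)

lemma nZ_sq_s15 (k : ℤ × ℤ) : nZ k ^ 2 = (k.1 : ℝ) ^ 2 + (k.2 : ℝ) ^ 2 :=
  Real.sq_sqrt (by positivity)

lemma nZ_sq_pos {k : ℤ × ℤ} (hk : k ≠ 0) : 0 < nZ k ^ 2 := by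
  rw [nZ_sq_s15]
  rcases Prod.ext_iff.not.mp hk |> not_and_or.mp with h | h
  · have : (k.1 : ℝ) ≠ 0 := by exact_mod_cast h
    positivity
  · have : (k.2 : ℝ) ≠ 0 := by exact_mod_cast h
    positivity

section SMulRot

variable (m : ℤ) (j : ℤ × ℤ)

lemma crossZ_smul_rotZ : crossZ (m • rotZ j) j = -m * nZ j ^ 2 := by
  simp only [crossZ, nZ_sq_s15, rotZ, Prod.smul_fst, Prod.smul_snd, smul_eq_mul]
  push_cast; ring

lemma nZ_smul_rotZ_sq : nZ (m • rotZ j) ^ 2 = m ^ 2 * nZ j ^ 2 := by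
  simp only [nZ_sq_s15, rotZ, Prod.smul_fst, Prod.smul_snd, smul_eq_mul]
  push_cast; ring

lemma nZ_smul_rotZ_sub_sq : nZ (m • rotZ j - j) ^ 2 = (m ^ 2 + 1) * nZ j ^ 2 := by
  simp only [nZ_sq_s15, rotZ, Prod.fst_sub, Prod.snd_sub, Prod.smul_fst, Prod.smul_snd, smul_eq_mul]
  push_cast; ring

lemma nZ_smul_rotZ_add_sq : nZ (m • rotZ j + j) ^ 2 = (m ^ 2 + 1) * nZ j ^ 2 := by
  simp only [nZ_sq_s15, rotZ, Prod.fst_add, Prod.snd_add, Prod.smul_fst, Prod.smul_snd, smul_eq_mul]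
  push_cast; ring

end SMulRot

section Nondegenerate

variable {m : ℤ} {j : ℤ × ℤ} (hm : m ≠ 0) (hj : j ≠ 0)
include hm hj

lemma ricciCoeff_smul_rotZ :
    ricciCoeff (m • rotZ j) j = m ^ 2 * nZ j ^ 2 / (m ^ 2 + 1) := by
  have hN := (nZ_sq_pos hj).ne'
  have hm' : (m : ℝ) ≠ 0 := by exact_mod_cast hm
  rw [ricciCoeff, crossZ_smul_rotZ, nZ_smul_rotZ_sq, nZ_smul_rotZ_sub_sq, nZ_smul_rotZ_add_sq]
  field_simp

lemma half_nZ_sq_le_ricciCoeff_smul_rotZ :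
    nZ j ^ 2 / 2 ≤ ricciCoeff (m • rotZ j) j := by
  have hm1 : (1 : ℝ) ≤ (m : ℝ) ^ 2 := by
    have : (1 : ℤ) ≤ m ^ 2 := by rcases hm.lt_or_gt with h | h <;> nlinarith
    exact_mod_cast this
  have hN := nZ_sq_pos hj
  rw [ricciCoeff_smul_rotZ hm hj, div_le_div_iff₀ two_pos (by positivity)]
  nlinarith

lemma smul_rotZ_mem :
    m • rotZ j ≠ 0 ∧ m • rotZ j ≠ j ∧ m • rotZ j ≠ -j := by
  have hcross : crossZ (m • rotZ j) j ≠ 0 := by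
    rw [crossZ_smul_rotZ]
    exact mul_ne_zero (neg_ne_zero.mpr (by exact_mod_cast hm)) (nZ_sq_pos hj).ne'
  -- `0`, `j` and `-j` are collinear with `j`
  refine ⟨?_, ?_, ?_⟩ <;> rintro h <;> rw [h] at hcross <;> simp [crossZ, mul_comm] at hcross

end Nondegenerate

theorem ricci_not_summable (j : ℤ × ℤ) (hj : j ≠ 0) :
    ¬ Summable (fun i : {i : ℤ × ℤ // i ≠ 0 ∧ i ≠ j ∧ i ≠ -j} =>
      (crossZ (i : ℤ × ℤ) j) ^ 4 * ((nZ (i : ℤ × ℤ)) ^ 2 + (nZ j) ^ 2)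
        / ((nZ (i : ℤ × ℤ)) ^ 2 * (nZ j) ^ 2
            * (nZ ((i : ℤ × ℤ) - j)) ^ 2 * (nZ ((i : ℤ × ℤ) + j)) ^ 2)) := by
  intro hsum
  have hm (n : ℕ) : ((n : ℤ) + 1) ≠ 0 := by omega
  let g (n : ℕ) : {i : ℤ × ℤ // i ≠ 0 ∧ i ≠ j ∧ i ≠ -j} :=
    ⟨((n : ℤ) + 1) • rotZ j, smul_rotZ_mem (hm n) hj⟩
  have hg : Function.Injective g := by
    have hrot : rotZ j ≠ 0 := by simpa using (smul_rotZ_mem one_ne_zero hj).1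
    intro a b hab
    have := smul_left_injective ℤ hrot (congrArg Subtype.val hab)
    omega
  have hlim := (hsum.comp_injective hg).tendsto_atTop_zero
  obtain ⟨n, hn⟩ := (hlim.eventually (gt_mem_nhds (half_pos (nZ_sq_pos hj)))).exists
  exact hn.not_ge (half_nZ_sq_le_ricciCoeff_smul_rotZ (hm n) hj)
end
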